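/- Let (x^t)_{t=0}^{T} be vectors in ℝ^d satisfying ‖x^{t} - x^{T}‖ ≤ C·G·(∑_{i=t+1}^{T} η_i) for all t, and let τ = ∑_{t=1}^{T} (-η_t) ∑_{n=1}^{N} γ^t_n · (x_n^{t-1}) with scalars |γ^t_n| ≤ Γ. Define β_n = ∑_{t=1}^{T} (-η_t) γ^t_n. Then ‖τ - ∑_{n=1}^{N} β_n · x_n^{T}‖ ≤ N·C·G·Γ·(∑_{t=1}^{T} ∑_{i=t}^{T} η_t η_i). -/
import Mathlib


/-- Approximate linear combination of final inputs. -/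
theorem approx_linear_combination {d : ℕ} (N T : ℕ)
    (x : ℕ → ℕ → EuclideanSpace ℝ (Fin d))
    (η : ℕ → ℝ) (hη : ∀ t, 0 < η t)
    (C G Γ : ℝ) (hC : 0 ≤ C) (hG : 0 ≤ G) (hΓ : 0 ≤ Γ)
    (γ : ℕ → ℕ → ℝ)
    (hγ : ∀ t n, |γ t n| ≤ Γ)
    (hdrift : ∀ n, n < N → ∀ t ∈ Finset.Icc 1 T,
      ‖x n (t - 1) - x n T‖ ≤ C * G * ∑ i ∈ Finset.Icc t T, η i)
    (τ : EuclideanSpace ℝ (Fin d))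
    (hτ : τ = ∑ t ∈ Finset.Icc 1 T, ∑ n ∈ Finset.range N,
      (-η t * γ t n) • x n (t - 1))
    (β : ℕ → ℝ)
    (hβ : ∀ n, β n = ∑ t ∈ Finset.Icc 1 T, -η t * γ t n) :
    ‖τ - ∑ n ∈ Finset.range N, β n • x n T‖ ≤
      (N : ℝ) * C * G * Γ * ∑ t ∈ Finset.Icc 1 T, ∑ i ∈ Finset.Icc t T, η t * η i := by
  have key : τ - ∑ n ∈ Finset.range N, β n • x n T
      = ∑ t ∈ Finset.Icc 1 T, ∑ n ∈ Finset.range N,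
        (-η t * γ t n) • (x n (t - 1) - x n T) := by
    rw [hτ]
    simp only [smul_sub, Finset.sum_sub_distrib]
    congr 1
    rw [Finset.sum_comm]
    congr 1; ext n
    rw [hβ n, Finset.sum_smul]
  rw [key]
  calc ‖∑ t ∈ Finset.Icc 1 T, ∑ n ∈ Finset.range N,
        (-η t * γ t n) • (x n (t - 1) - x n T)‖
      ≤ ∑ t ∈ Finset.Icc 1 T, ∑ n ∈ Finset.range N,
        ‖(-η t * γ t n) • (x n (t - 1) - x n T)‖ := by
        refine (norm_sum_le _ _).trans ?_
        exact Finset.sum_le_sum fun t _ => norm_sum_le _ _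
    _ ≤ ∑ t ∈ Finset.Icc 1 T, ∑ n ∈ Finset.range N,
        η t * Γ * (C * G * ∑ i ∈ Finset.Icc t T, η i) := by
        refine Finset.sum_le_sum fun t ht => Finset.sum_le_sum fun n hn => ?_
        rw [norm_smul]
        have h1 : ‖(-η t * γ t n)‖ ≤ η t * Γ := by
          rw [Real.norm_eq_abs, abs_mul, abs_neg, abs_of_pos (hη t)]
          exact mul_le_mul_of_nonneg_left (hγ t n) (hη t).le
        exact mul_le_mul h1 (hdrift n (Finset.mem_range.mp hn) t ht)
          (norm_nonneg _) (mul_nonneg (hη t).le hΓ)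
    _ = (N : ℝ) * C * G * Γ * ∑ t ∈ Finset.Icc 1 T, ∑ i ∈ Finset.Icc t T, η t * η i := by
        rw [Finset.mul_sum]
        refine Finset.sum_congr rfl fun t _ => ?_
        rw [Finset.sum_const, Finset.card_range, nsmul_eq_mul]
        simp only [Finset.mul_sum]
        refine Finset.sum_congr rfl fun i _ => ?_
        ring
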